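/- Let (L₀, L₋₁, δ) be a strict Lie 2-algebra, g a real Lie algebra, and (μ₋₁, μ₀, η) an action of (L₀, L₋₁, δ) on g[1] (i.e., satisfying constraints (1)–(4)). Let B be the linear span in g of the range of μ₋₁ together with all elements η(x,y) for x, y ∈ L₀. Assume that μ₀(x)(B) ⊆ B for all x ∈ L₀ and that [η(x,y), b] ∈ B for all x, y ∈ L₀ and b ∈ B. Then B is a Lie subalgebra of g, i.e., [B, B] ⊆ B. -/

import Mathlib

theorem Submodule.lie_mem_of_mem_span {R L : Type*} [CommRing R] [LieRing L] [LieAlgebra R L]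
    {B : Submodule R L} {s : Set L} (hs : ∀ a ∈ s, ∀ b ∈ B, ⁅a, b⁆ ∈ B)
    {a b : L} (ha : a ∈ span R s) (hb : b ∈ B) : ⁅a, b⁆ ∈ B := by
  induction ha using Submodule.span_induction with
  | mem x hx => exact hs x hx b hb
  | zero => simpa only [zero_lie] using B.zero_mem
  | add u v _ _ hu hv => simpa only [add_lie] using B.add_mem hu hv
  | smul c u _ hu => simpa only [smul_lie] using B.smul_mem c hu

theorem action_span_is_lieSubalgebra_general
    {L₀ : Type*} [LieRing L₀] [LieAlgebra ℝ L₀]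
    {Lm1 : Type*} [AddCommGroup Lm1] [Module ℝ Lm1]
    {g : Type*} [LieRing g] [LieAlgebra ℝ g]
    (δ : Lm1 →ₗ[ℝ] L₀)
    (μ₁ : Lm1 →ₗ[ℝ] g) (μ₀ : L₀ →ₗ[ℝ] LieDerivation ℝ g g)
    (η : L₀ →ₗ[ℝ] L₀ →ₗ[ℝ] g)
    -- constraint (1): `μ₀(δ w) = ad(μ₁ w)`
    (h1 : ∀ (w : Lm1) (a : g), μ₀ (δ w) a = ⁅μ₁ w, a⁆)
    (B : Submodule ℝ g)
    (hB : B = Submodule.span ℝ (Set.range μ₁ ∪ {a : g | ∃ x y : L₀, a = η x y}))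
    (hμ₀B : ∀ x : L₀, ∀ b ∈ B, μ₀ x b ∈ B)
    (hηB : ∀ x y : L₀, ∀ b ∈ B, ⁅η x y, b⁆ ∈ B) :
    ∀ a ∈ B, ∀ b ∈ B, ⁅a, b⁆ ∈ B := by
  intro a ha b hb
  rw [hB] at ha
  refine Submodule.lie_mem_of_mem_span (fun s hs c hc => ?_) ha hb
  rcases hs with ⟨w, rfl⟩ | ⟨x, y, rfl⟩
  · rw [← h1]
    exact hμ₀B _ _ hc
  · exact hηB _ _ _ hc

/-- Let `(L₀, Lm1, δ)` be a strict Lie 2-algebra, `g` a real Lie algebra, and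
`(μ₁, μ₀, η)` an action of it on `g[1]` (constraints (1)–(4)).  Let `B` be the linear span
in `g` of the range of `μ₁` together with all elements `η x y`.  If `μ₀(x)(B) ⊆ B` for all
`x ∈ L₀` and `⁅η x y, b⁆ ∈ B` for all `x, y ∈ L₀`, `b ∈ B`, then `B` is a Lie subalgebra
of `g`: `⁅B, B⁆ ⊆ B`. -/
theorem action_span_is_lieSubalgebra
    {L₀ : Type*} [LieRing L₀] [LieAlgebra ℝ L₀]
    {Lm1 : Type*} [AddCommGroup Lm1] [Module ℝ Lm1]
    [LieRingModule L₀ Lm1] [LieModule ℝ L₀ Lm1]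
    {g : Type*} [LieRing g] [LieAlgebra ℝ g]
    (δ : Lm1 →ₗ[ℝ] L₀) (hδ : ∀ (x : L₀) (w : Lm1), δ ⁅x, w⁆ = ⁅x, δ w⁆)
    (μ₁ : Lm1 →ₗ[ℝ] g) (μ₀ : L₀ →ₗ[ℝ] LieDerivation ℝ g g)
    (η : L₀ →ₗ[ℝ] L₀ →ₗ[ℝ] g) (hη : ∀ x : L₀, η x x = 0)
    -- constraint (1): `μ₀(δ w) = ad(μ₁ w)`
    (h1 : ∀ (w : Lm1) (a : g), μ₀ (δ w) a = ⁅μ₁ w, a⁆)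
    -- constraint (2): `μ₀⁅x,y⁆ − [μ₀ x, μ₀ y] = ad(η x y)`
    (h2 : ∀ (x y : L₀) (a : g),
      μ₀ ⁅x, y⁆ a - (μ₀ x (μ₀ y a) - μ₀ y (μ₀ x a)) = ⁅η x y, a⁆)
    -- constraint (3): `μ₁(x·w) − μ₀(x)(μ₁ w) = η x (δ w)`
    (h3 : ∀ (x : L₀) (w : Lm1), μ₁ ⁅x, w⁆ - μ₀ x (μ₁ w) = η x (δ w))
    -- constraint (4): the coherence equation for `η`
    (h4 : ∀ x y z : L₀,
      η x ⁅y, z⁆ - η y ⁅x, z⁆ + η z ⁅x, y⁆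
        + μ₀ x (η y z) - μ₀ y (η x z) + μ₀ z (η x y) = 0)
    (B : Submodule ℝ g)
    (hB : B = Submodule.span ℝ (Set.range μ₁ ∪ {a : g | ∃ x y : L₀, a = η x y}))
    (hμ₀B : ∀ x : L₀, ∀ b ∈ B, μ₀ x b ∈ B)
    (hηB : ∀ x y : L₀, ∀ b ∈ B, ⁅η x y, b⁆ ∈ B) :
    ∀ a ∈ B, ∀ b ∈ B, ⁅a, b⁆ ∈ B :=
  action_span_is_lieSubalgebra_general δ μ₁ μ₀ η h1 B hB hμ₀B hηB
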